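/- arXiv:1704.07597 — 8 statements merged into one kernel-verified Lean document; each statement's English description precedes it below -/
import Mathlib

section
/- Let A be an n×n row-stochastic real matrix with strictly positive diagonal entries, let ε₁,…,εₙ be real numbers with 0 < εᵢ < aᵢᵢ for every i, let 𝓔 = diag(ε₁,…,εₙ), and let σ̄ ∈ ℝ. Define the sequence (X_t) in ℝⁿ by an arbitrary initial condition X₁ and the recursion X_{t+1} = A X_t + 𝓔(σ̄ 𝟏ₙ − X_t), where 𝟏ₙ is the all-ones vector. Then X_t converges to σ̄ 𝟏ₙ as t → ∞. -/
/-- **Consensus with feedback (Theorem 1).**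
If `A` is an `n × n` row-stochastic matrix with positive diagonal, `𝓔 = diag ε` with
`0 < εᵢ < aᵢᵢ`, and `X` follows the opinion dynamics
`X_{t+1} = A X_t + 𝓔(σ̄ 𝟏ₙ − X_t)` from an arbitrary initial condition,
then `X_t → σ̄ 𝟏ₙ`. -/
theorem consensus_with_feedback_scalar
    {n : ℕ} (A : Matrix (Fin n) (Fin n) ℝ)
    (hA_nonneg : ∀ i j, 0 ≤ A i j)
    (hA_row : ∀ i, ∑ j, A i j = 1)
    (hA_diag : ∀ i, 0 < A i i)
    (ε : Fin n → ℝ) (hε_pos : ∀ i, 0 < ε i) (hε_lt : ∀ i, ε i < A i i)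
    (σ : ℝ) (X : ℕ → Fin n → ℝ)
    (hX : ∀ t, X (t + 1) =
      A.mulVec (X t) + (Matrix.diagonal ε).mulVec ((fun _ => σ) - X t)) :
    Filter.Tendsto X Filter.atTop (nhds (fun _ => σ)) := by
  rw [tendsto_pi_nhds]
  rcases Nat.eq_zero_or_pos n with hn | hn
  · intro i; exact absurd i.isLt (by omega)
  have : Nonempty (Fin n) := ⟨⟨0, hn⟩⟩
  have hne : (Finset.univ : Finset (Fin n)).Nonempty := Finset.univ_nonempty
  set εm : ℝ := Finset.univ.inf' hne ε with hεm
  have hεm_pos : 0 < εm := by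
    rw [hεm, Finset.lt_inf'_iff]; intro i _; exact hε_pos i
  have hεm_le : ∀ i, εm ≤ ε i := fun i => Finset.inf'_le _ (Finset.mem_univ i)
  have hAii_le : ∀ i, A i i ≤ 1 := by
    intro i
    rw [← hA_row i]
    exact Finset.single_le_sum (fun j _ => hA_nonneg i j) (Finset.mem_univ i)
  set ρ : ℝ := 1 - εm with hρ
  have hρ_lt : ρ < 1 := by simp [hρ]; linarith
  have hρ_nonneg : 0 ≤ ρ := by
    have i0 : Fin n := ⟨0, hn⟩
    have := hε_lt i0
    have := hAii_le i0
    have := hεm_le i0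
    simp [hρ]; linarith
  set M : ℕ → ℝ := fun t => Finset.univ.sup' hne (fun i => |X t i - σ|) with hM
  have hM_nonneg : ∀ t, 0 ≤ M t := by
    intro t
    have i0 : Fin n := ⟨0, hn⟩
    exact le_trans (abs_nonneg (X t i0 - σ)) (Finset.le_sup' (fun i => |X t i - σ|) (Finset.mem_univ i0))
  have hM_le : ∀ t i, |X t i - σ| ≤ M t :=
    fun t i => Finset.le_sup' (fun j => |X t j - σ|) (Finset.mem_univ i)
  -- key recursion
  have key : ∀ t i, X (t + 1) i - σ =
      ∑ j, (A i j - if i = j then ε i else 0) * (X t j - σ) := by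
    intro t i
    have h := congrFun (hX t) i
    have hd : (Matrix.diagonal ε).mulVec ((fun _ => σ) - X t) i
        = ε i * (σ - X t i) := by
      simp [Matrix.mulVec, Matrix.diagonal, dotProduct, Finset.sum_ite_eq,
        ite_mul]
    have hσ : σ = ∑ j, A i j * σ := by rw [← Finset.sum_mul, hA_row, one_mul]
    rw [Pi.add_apply, hd] at h
    rw [h, Matrix.mulVec]
    simp only [sub_mul, mul_sub, ite_mul, zero_mul, Finset.sum_sub_distrib,
      Finset.sum_ite_eq, Finset.mem_univ, if_true, dotProduct]
    rw [← Finset.sum_mul, hA_row, one_mul]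
    ring
  have hstep : ∀ t, M (t + 1) ≤ ρ * M t := by
    intro t
    apply Finset.sup'_le
    intro i _
    rw [key t i]
    calc |∑ j, (A i j - if i = j then ε i else 0) * (X t j - σ)|
        ≤ ∑ j, |(A i j - if i = j then ε i else 0) * (X t j - σ)| :=
          Finset.abs_sum_le_sum_abs _ _
      _ ≤ ∑ j, (A i j - if i = j then ε i else 0) * M t := by
          apply Finset.sum_le_sum
          intro j _
          rw [abs_mul]
          have hB : 0 ≤ A i j - if i = j then ε i else 0 := by
            by_cases h : i = j
            · subst h; simp; linarith [hε_lt i]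
            · simp [h]; exact hA_nonneg i j
          rw [abs_of_nonneg hB]
          exact mul_le_mul_of_nonneg_left (hM_le t j) hB
      _ = (1 - ε i) * M t := by
          rw [← Finset.sum_mul]
          congr 1
          rw [Finset.sum_sub_distrib, hA_row]
          simp [Finset.sum_ite_eq, Finset.mem_univ]
      _ ≤ ρ * M t := by
          apply mul_le_mul_of_nonneg_right _ (hM_nonneg t)
          have := hεm_le i; simp [hρ]; linarith
  have hbound : ∀ t, M t ≤ ρ ^ t * M 0 := by
    intro t
    induction t with
    | zero => simp
    | succ t ih =>
      calc M (t + 1) ≤ ρ * M t := hstep t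
        _ ≤ ρ * (ρ ^ t * M 0) := mul_le_mul_of_nonneg_left ih hρ_nonneg
        _ = ρ ^ (t + 1) * M 0 := by ring
  intro i
  rw [tendsto_iff_norm_sub_tendsto_zero]
  have hlim : Filter.Tendsto (fun t => ρ ^ t * M 0) Filter.atTop (nhds 0) := by
    have := (tendsto_pow_atTop_nhds_zero_of_lt_one hρ_nonneg hρ_lt).mul_const (M 0)
    simpa using this
  apply squeeze_zero (fun t => norm_nonneg _) _ hlim
  intro t
  simp only [Real.norm_eq_abs]
  exact le_trans (hM_le t i) (hbound t)
end

section
/- Let A be an n×n row-stochastic real matrix with strictly positive diagonal entries, let ε₁,…,εₙ satisfy 0 < εᵢ < aᵢᵢ for every i, let 𝓔 = diag(ε₁,…,εₙ), and let σ̄ ∈ ℝ. Let (X_t) satisfy X_{t+1} = A X_t + 𝓔(σ̄ 𝟏ₙ − X_t) from an arbitrary X₁ ∈ ℝⁿ. Then the induced infinity norm satisfies ‖A − 𝓔‖_∞ < 1, and for every t ≥ 1 and every i, |x_tⁱ − σ̄| ≤ ‖A − 𝓔‖_∞^{t−1} · ‖X₁ − σ̄ 𝟏ₙ‖_∞; in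 particular consensus to σ̄ is reached exponentially fast with rate ‖A − 𝓔‖_∞. -/
open Filter

/-- The vector infinity norm: maximum absolute value of the entries. -/
noncomputable def vecInfNorm {ι : Type*} [Fintype ι] (v : ι → ℝ) : ℝ :=
  ⨆ i, |v i|

/-- The matrix operator norm induced by the vector infinity norm,
which equals the maximum absolute row sum. -/
noncomputable def matInfNorm {ι : Type*} [Fintype ι] (M : Matrix ι ι ℝ) : ℝ :=
  ⨆ i, ∑ j, |M i j|

/-- **Corollary 1: exponential consensus with feedback.**
Under the conditions of Theorem 1, `‖A − 𝓔‖_∞ < 1` and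
`|x_tⁱ − σ̄| ≤ ‖A − 𝓔‖_∞^{t−1}·‖X₁ − σ̄𝟏ₙ‖_∞` for every `t ≥ 1` and every `i`
(here `X 0` plays the role of the initial condition `X₁`). -/
theorem exponential_consensus_with_feedback_scalar
    {n : ℕ} (A : Matrix (Fin n) (Fin n) ℝ)
    (hA_nonneg : ∀ i j, 0 ≤ A i j)
    (hA_row : ∀ i, ∑ j, A i j = 1)
    (hA_diag : ∀ i, 0 < A i i)
    (ε : Fin n → ℝ) (hε_pos : ∀ i, 0 < ε i) (hε_lt : ∀ i, ε i < A i i)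
    (σ : ℝ) (X : ℕ → Fin n → ℝ)
    (hX : ∀ t, X (t + 1) =
      A.mulVec (X t) + (Matrix.diagonal ε).mulVec ((fun _ => σ) - X t)) :
    matInfNorm (A - Matrix.diagonal ε) < 1 ∧
      ∀ t : ℕ, ∀ i, |X t i - σ| ≤
        (matInfNorm (A - Matrix.diagonal ε)) ^ t *
          vecInfNorm (X 0 - (fun _ => σ)) := by
  set M := A - Matrix.diagonal ε with hM
  set c := matInfNorm M with hc
  -- absolute values of entries of M
  have habs : ∀ i j, |M i j| = A i j - Matrix.diagonal ε i j := by
    intro i j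
    by_cases h : i = j
    · subst h
      simp only [hM, Matrix.sub_apply, Matrix.diagonal_apply_eq]
      exact abs_of_nonneg (sub_nonneg.mpr (le_of_lt (hε_lt i)))
    · simp only [hM, Matrix.sub_apply, Matrix.diagonal_apply_ne _ h, sub_zero]
      exact abs_of_nonneg (hA_nonneg i j)
  have hdiagsum : ∀ i : Fin n, ∑ j, Matrix.diagonal ε i j = ε i := by
    intro i
    simp [Matrix.diagonal_apply]
  have hrow : ∀ i, ∑ j, |M i j| = 1 - ε i := by
    intro i
    simp only [habs]
    rw [Finset.sum_sub_distrib, hA_row i, hdiagsum i]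
  have hε_le1 : ∀ i, ε i ≤ 1 := by
    intro i
    have h1 : A i i ≤ ∑ j, A i j :=
      Finset.single_le_sum (fun j _ => hA_nonneg i j) (Finset.mem_univ i)
    rw [hA_row i] at h1
    exact le_of_lt (lt_of_lt_of_le (hε_lt i) h1)
  have hc_nonneg : (0:ℝ) ≤ c :=
    Real.iSup_nonneg fun i => Finset.sum_nonneg fun j _ => abs_nonneg _
  have hc_lt : c < 1 := by
    rcases isEmpty_or_nonempty (Fin n) with hE | hNE
    · rw [hc, matInfNorm, Real.iSup_of_isEmpty]; norm_num
    · obtain ⟨i, hi⟩ := exists_eq_ciSup_of_finite (f := fun i => ∑ j, |M i j|)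
      rw [hc, matInfNorm, ← hi, hrow i]
      linarith [hε_pos i]
  -- the key recursion
  have hrec : ∀ t i, X (t + 1) i - σ = ∑ j, M i j * (X t j - σ) := by
    intro t i
    have h1 : X (t + 1) i = (∑ j, A i j * X t j) + ε i * (σ - X t i) := by
      rw [hX t]
      simp only [Pi.add_apply, Matrix.mulVec_diagonal, Pi.sub_apply]
      simp [Matrix.mulVec, dotProduct]
    have h2 : ∑ j, M i j * (X t j - σ)
        = (∑ j, A i j * (X t j - σ)) - ε i * (X t i - σ) := by
      simp only [hM, Matrix.sub_apply, sub_mul]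
      rw [Finset.sum_sub_distrib]
      congr 1
      rw [Finset.sum_eq_single i]
      · simp
      · intro j _ hj
        simp [Matrix.diagonal_apply_ne' _ hj]
      · intro h; exact absurd (Finset.mem_univ i) h
    have h3 : ∑ j, A i j * (X t j - σ) = (∑ j, A i j * X t j) - σ := by
      simp only [mul_sub]
      rw [Finset.sum_sub_distrib, ← Finset.sum_mul, hA_row i, one_mul]
    rw [h1, h2, h3]; ring
  have hvbound : ∀ (v : Fin n → ℝ) (i : Fin n), |v i| ≤ vecInfNorm v := by
    intro v i
    unfold vecInfNorm
    exact le_ciSup (f := fun k => |v k|) (Set.Finite.bddAbove (Set.finite_range _)) i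
  have hv_nonneg : ∀ v : Fin n → ℝ, 0 ≤ vecInfNorm v := by
    intro v; exact Real.iSup_nonneg fun i => abs_nonneg _
  set V0 := vecInfNorm (X 0 - (fun _ => σ)) with hV0
  have hV0_nonneg : 0 ≤ V0 := hv_nonneg _
  -- main induction on the vector norm
  have main : ∀ t, vecInfNorm (fun j => X t j - σ) ≤ c ^ t * V0 := by
    intro t
    induction t with
    | zero =>
      rw [pow_zero, one_mul]
      apply le_of_eq
      rw [hV0]
      congr 1
    | succ t ih =>
      have hterm : ∀ i, |X (t + 1) i - σ| ≤ c ^ (t + 1) * V0 := by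
        intro i
        rw [hrec t i]
        calc |∑ j, M i j * (X t j - σ)| ≤ ∑ j, |M i j * (X t j - σ)| :=
              Finset.abs_sum_le_sum_abs _ _
          _ = ∑ j, |M i j| * |X t j - σ| := by simp [abs_mul]
          _ ≤ ∑ j, |M i j| * vecInfNorm (fun j => X t j - σ) := by
              apply Finset.sum_le_sum
              intro j _
              exact mul_le_mul_of_nonneg_left (hvbound (fun j => X t j - σ) j)
                (abs_nonneg _)
          _ = (∑ j, |M i j|) * vecInfNorm (fun j => X t j - σ) := by
              rw [Finset.sum_mul]
          _ ≤ c * (c ^ t * V0) := by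
              apply mul_le_mul
              · rw [hc]; unfold matInfNorm
                exact le_ciSup (f := fun k => ∑ j, |M k j|)
                  (Set.Finite.bddAbove (Set.finite_range _)) i
              · exact ih
              · exact hv_nonneg _
              · exact hc_nonneg
          _ = c ^ (t + 1) * V0 := by ring
      exact Real.iSup_le hterm
        (mul_nonneg (pow_nonneg hc_nonneg _) hV0_nonneg)
  refine ⟨hc_lt, fun t i => ?_⟩
  exact le_trans (hvbound (fun j => X t j - σ) i) (main t)
end

section
/- Let A be an n×n row-stochastic real matrix with strictly positive diagonal entries and let ε₁,…,εₙ satisfy 0 < εᵢ < aᵢᵢ for every i, with 𝓔 = diag(ε₁,…,εₙ). Then the matrix Iₙ − A + 𝓔 is invertible and (Iₙ − A + 𝓔)^{-1} 𝓔 𝟏ₙ = 𝟏ₙ. -/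
/-- For a row-stochastic `A` with positive diagonal and `𝓔 = diag ε` with
`0 < εᵢ < aᵢᵢ`, the matrix `Iₙ − A + 𝓔` is invertible and
`(Iₙ − A + 𝓔)⁻¹ 𝓔 𝟏ₙ = 𝟏ₙ`. -/
theorem inv_one_sub_add_diagonal_mulVec_one
    {n : ℕ} (A : Matrix (Fin n) (Fin n) ℝ)
    (hA_nonneg : ∀ i j, 0 ≤ A i j)
    (hA_row : ∀ i, ∑ j, A i j = 1)
    (hA_diag : ∀ i, 0 < A i i)
    (ε : Fin n → ℝ) (hε_pos : ∀ i, 0 < ε i) (hε_lt : ∀ i, ε i < A i i) :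
    IsUnit (1 - A + Matrix.diagonal ε) ∧
      ((1 - A + Matrix.diagonal ε)⁻¹).mulVec
          ((Matrix.diagonal ε).mulVec (fun _ => (1 : ℝ))) =
        (fun _ => (1 : ℝ)) := by
  set M := 1 - A + Matrix.diagonal ε with hM
  have hMdiag : ∀ i, M i i = 1 - A i i + ε i := by
    intro i; simp [hM, Matrix.one_apply, Matrix.diagonal_apply]
  have hMoff : ∀ i j, i ≠ j → M i j = - A i j := by
    intro i j hij; simp [hM, Matrix.one_apply_ne hij, Matrix.diagonal_apply_ne _ hij]
  have hdet : M.det ≠ 0 := by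
    apply det_ne_zero_of_sum_row_lt_diag
    intro k
    have h1 : ∑ j ∈ Finset.univ.erase k, ‖M k j‖ = ∑ j ∈ Finset.univ.erase k, A k j := by
      apply Finset.sum_congr rfl
      intro j hj
      rw [hMoff k j (Ne.symm (Finset.ne_of_mem_erase hj))]
      simp [abs_of_nonneg (hA_nonneg k j)]
    have h2 : ∑ j ∈ Finset.univ.erase k, A k j = 1 - A k k := by
      have := Finset.add_sum_erase Finset.univ (A k) (Finset.mem_univ k)
      rw [hA_row k] at this
      linarith
    have h3 : A k k ≤ 1 := by
      have := h2 ▸ Finset.sum_nonneg (fun j _ => hA_nonneg k j)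
      linarith
    rw [h1, h2, hMdiag k, Real.norm_eq_abs,
      abs_of_pos (by have := hε_pos k; linarith)]
    have := hε_pos k
    linarith
  have hUnit : IsUnit M := by
    rw [Matrix.isUnit_iff_isUnit_det]
    exact isUnit_iff_ne_zero.mpr hdet
  refine ⟨hUnit, ?_⟩
  have hMv : M.mulVec (fun _ => (1 : ℝ)) =
      (Matrix.diagonal ε).mulVec (fun _ => (1 : ℝ)) := by
    funext i
    simp [hM, Matrix.mulVec, dotProduct, Matrix.add_apply, Matrix.sub_apply,
      Finset.sum_sub_distrib, Finset.sum_add_distrib, Finset.sum_ite_eq, hA_row i, Matrix.one_apply, Matrix.diagonal_apply]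
  rw [← hMv, Matrix.mulVec_mulVec, Matrix.nonsing_inv_mul M (isUnit_iff_ne_zero.mpr hdet), Matrix.one_mulVec]
end

section
/- Let A be an n×n row-stochastic real matrix whose first row is (1, 0, …, 0) (the first agent is the leader), with aᵢᵢ > 0 for all i, and let Ã denote the (n−1)×(n−1) lower-right submatrix (aᵢⱼ)_{i,j≥2}. Assume Ã is substochastic with at least one row of Ã summing to strictly less than 1, and Ã is irreducible. Let X_t = A X_{t−1} with initial condition X₁ ∈ ℝⁿ whose first coordinate equals σ̄. Then X_t converges to σ̄ 𝟏ₙ as t → ∞, i.e., all agents reach consensus to the leader's value σ̄. -/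
lemma aux_pow_entry_nonneg {n : ℕ} (M : Matrix (Fin n) (Fin n) ℝ)
    (h : ∀ i j, 0 ≤ M i j) : ∀ t i j, 0 ≤ (M ^ t) i j := by
  intro t
  induction t with
  | zero =>
    intro i j
    rw [pow_zero]
    by_cases hij : i = j <;> simp [Matrix.one_apply, hij]
  | succ t ih =>
    intro i j
    rw [pow_succ, Matrix.mul_apply]
    exact Finset.sum_nonneg fun k _ => mul_nonneg (ih i k) (h k j)

lemma aux_rowsum_add {n : ℕ} (M : Matrix (Fin n) (Fin n) ℝ) (s t : ℕ) (i : Fin n) :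
    ∑ j, (M ^ (s + t)) i j = ∑ j, (M ^ s) i j * (∑ k, (M ^ t) j k) := by
  rw [pow_add]
  simp only [Matrix.mul_apply, Finset.mul_sum]
  rw [Finset.sum_comm]

lemma aux_rowsum_le_one {n : ℕ} (M : Matrix (Fin n) (Fin n) ℝ)
    (hnn : ∀ i j, 0 ≤ M i j) (hrow : ∀ i, ∑ j, M i j ≤ 1) :
    ∀ t i, ∑ j, (M ^ t) i j ≤ 1 := by
  intro t
  induction t with
  | zero => intro i; simp [Matrix.one_apply]
  | succ t ih =>
    intro i
    calc ∑ j, (M ^ (t + 1)) i j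
        = ∑ j, (M ^ t) i j * (∑ k, (M ^ 1) j k) := aux_rowsum_add M t 1 i
      _ ≤ ∑ j, (M ^ t) i j * 1 := by
          refine Finset.sum_le_sum fun j _ => ?_
          refine mul_le_mul_of_nonneg_left ?_ (aux_pow_entry_nonneg M hnn t i j)
          rw [pow_one]; exact hrow j
      _ = ∑ j, (M ^ t) i j := by simp
      _ ≤ 1 := ih i

/-- **Consensus with an unknown leader (Theorem 2).**
Let `A` be row-stochastic with first row `(1,0,…,0)` and positive diagonal, and let
`Ã` be the lower-right submatrix. If `Ã` is substochastic and irreducible, with at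
least one row of `Ã` summing to strictly less than `1`, then the dynamics
`X_t = A X_{t−1}` with leader opinion `σ̄` converges: `X_t → σ̄𝟏ₙ`. -/
theorem consensus_with_leader_scalar
    {n : ℕ} (A : Matrix (Fin (n + 1)) (Fin (n + 1)) ℝ)
    (hA_nonneg : ∀ i j, 0 ≤ A i j)
    (hA_row : ∀ i, ∑ j, A i j = 1)
    (hA_diag : ∀ i, 0 < A i i)
    (hA_leader₁ : A 0 0 = 1) (hA_leader₂ : ∀ j, j ≠ 0 → A 0 j = 0)
    (Atil : Matrix (Fin n) (Fin n) ℝ)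
    (hAtil : ∀ i j, Atil i j = A i.succ j.succ)
    (hsub_nonneg : ∀ i j, 0 ≤ Atil i j)
    (hsub_row : ∀ i, ∑ j, Atil i j ≤ 1)
    (hsub_strict : ∃ i, ∑ j, Atil i j < 1)
    (hirr : ∀ i j, ∃ t : ℕ, 0 < t ∧ 0 < (Atil ^ t) i j)
    (σ : ℝ) (X : ℕ → Fin (n + 1) → ℝ)
    (hX : ∀ t, X (t + 1) = A.mulVec (X t))
    (hX₀ : X 0 0 = σ) :
    Filter.Tendsto X Filter.atTop (nhds (fun _ => σ)) := by
  obtain ⟨i₀, hi₀⟩ := hsub_strict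
  have hpn := aux_pow_entry_nonneg Atil hsub_nonneg
  have hle1 := aux_rowsum_le_one Atil hsub_nonneg hsub_row
  have hmono : ∀ s t i, ∑ j, (Atil ^ (s + t)) i j ≤ ∑ j, (Atil ^ s) i j := by
    intro s t i
    rw [aux_rowsum_add]
    calc ∑ j, (Atil ^ s) i j * (∑ k, (Atil ^ t) j k)
        ≤ ∑ j, (Atil ^ s) i j * 1 :=
          Finset.sum_le_sum fun j _ => mul_le_mul_of_nonneg_left (hle1 t j) (hpn s i j)
      _ = _ := by simp
  -- the leader's opinion never changes
  have hX0 : ∀ t, X t 0 = σ := by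
    intro t
    induction t with
    | zero => exact hX₀
    | succ t ih =>
      rw [hX t]
      have h1 : A.mulVec (X t) 0 = ∑ j, A 0 j * X t j := rfl
      rw [h1, Finset.sum_eq_single 0
        (fun j _ hj => by rw [hA_leader₂ j hj, zero_mul])
        (fun h => absurd (Finset.mem_univ (0 : Fin (n + 1))) h),
        hA_leader₁, one_mul, ih]
  -- the deviation of followers from the leader
  set Z : ℕ → Fin n → ℝ := fun t i => X t i.succ - σ with hZdef
  have hZrec : ∀ t, Z (t + 1) = Atil.mulVec (Z t) := by
    intro t
    funext i
    have hrow : A i.succ 0 + ∑ k, Atil i k = 1 := by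
      rw [← hA_row i.succ, Fin.sum_univ_succ]
      congr 1
      exact Finset.sum_congr rfl fun k _ => hAtil i k
    have hlhs : Z (t + 1) i = (∑ j, A i.succ j * X t j) - σ := by
      simp only [hZdef, hX t]; rfl
    have hrhs : Atil.mulVec (Z t) i = ∑ k, Atil i k * (X t k.succ - σ) := rfl
    rw [hlhs, hrhs, Fin.sum_univ_succ, hX0 t]
    have h2 : ∑ k : Fin n, A i.succ k.succ * X t k.succ
        = ∑ k : Fin n, Atil i k * X t k.succ :=
      Finset.sum_congr rfl fun k _ => by rw [hAtil i k]
    rw [h2]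
    have h3 : ∑ k : Fin n, Atil i k * (X t k.succ - σ)
        = (∑ k : Fin n, Atil i k * X t k.succ) - (∑ k, Atil i k) * σ := by
      simp only [mul_sub]
      rw [Finset.sum_sub_distrib, Finset.sum_mul]
    rw [h3]
    have h4 : A i.succ 0 * σ + (∑ k, Atil i k) * σ = σ := by
      rw [← add_mul, hrow, one_mul]
    linarith
  have hZt : ∀ t, Z t = (Atil ^ t).mulVec (Z 0) := by
    intro t
    induction t with
    | zero => rw [pow_zero, Matrix.one_mulVec]
    | succ t ih => rw [hZrec t, ih, Matrix.mulVec_mulVec, ← pow_succ']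
  -- for each row there is a power with row sum < 1
  have hstep : ∀ i : Fin n, ∃ t, ∑ j, (Atil ^ t) i j < 1 := by
    intro i
    obtain ⟨t, _, hpos⟩ := hirr i i₀
    refine ⟨t + 1, ?_⟩
    rw [aux_rowsum_add Atil t 1 i]
    have h1 : ∑ j, (Atil ^ t) i j * (∑ k, (Atil ^ 1) j k) < ∑ j, (Atil ^ t) i j := by
      apply Finset.sum_lt_sum
      · intro j _
        calc (Atil ^ t) i j * (∑ k, (Atil ^ 1) j k)
            ≤ (Atil ^ t) i j * 1 := mul_le_mul_of_nonneg_left (hle1 1 j) (hpn t i j)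
          _ = _ := mul_one _
      · refine ⟨i₀, Finset.mem_univ _, ?_⟩
        have h1lt : ∑ k, (Atil ^ 1) i₀ k < 1 := by rw [pow_one]; exact hi₀
        calc (Atil ^ t) i i₀ * (∑ k, (Atil ^ 1) i₀ k)
            < (Atil ^ t) i i₀ * 1 := mul_lt_mul_of_pos_left h1lt hpos
          _ = _ := mul_one _
    exact h1.trans_le (hle1 t i)
  choose T hT using hstep
  set N : ℕ := (Finset.univ.sup T) + 1 with hN
  have hrN : ∀ i, ∑ j, (Atil ^ N) i j < 1 := by
    intro i
    have hTi : T i ≤ N := le_trans (Finset.le_sup (Finset.mem_univ i)) (Nat.le_succ _)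
    have hm := hmono (T i) (N - T i) i
    rw [Nat.add_sub_cancel' hTi] at hm
    exact lt_of_le_of_lt hm (hT i)
  have hne : (Finset.univ : Finset (Fin n)).Nonempty := ⟨i₀, Finset.mem_univ i₀⟩
  set c : ℝ := Finset.univ.sup' hne (fun i => ∑ j, (Atil ^ N) i j) with hc
  have hc1 : c < 1 := (Finset.sup'_lt_iff hne).mpr fun i _ => hrN i
  have hcN : ∀ i, ∑ j, (Atil ^ N) i j ≤ c := by
    intro i
    rw [hc]
    exact Finset.le_sup' (fun i => ∑ j, (Atil ^ N) i j) (Finset.mem_univ i)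
  have hc0 : 0 ≤ c :=
    le_trans (Finset.sum_nonneg fun j _ => hpn N i₀ j) (hcN i₀)
  have hck : ∀ k i, ∑ j, (Atil ^ (k * N)) i j ≤ c ^ k := by
    intro k
    induction k with
    | zero =>
      intro i
      simp only [Nat.zero_mul, pow_zero]
      exact hle1 0 i
    | succ k ih =>
      intro i
      have hkn : (k + 1) * N = N + k * N := by ring
      rw [hkn, aux_rowsum_add]
      calc ∑ j, (Atil ^ N) i j * (∑ l, (Atil ^ (k * N)) j l)
          ≤ ∑ j, (Atil ^ N) i j * c ^ k :=
            Finset.sum_le_sum fun j _ => mul_le_mul_of_nonneg_left (ih j) (hpn N i j)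
        _ = (∑ j, (Atil ^ N) i j) * c ^ k := by rw [Finset.sum_mul]
        _ ≤ c * c ^ k := mul_le_mul_of_nonneg_right (hcN i) (pow_nonneg hc0 k)
        _ = c ^ (k + 1) := (pow_succ' c k).symm
  -- row sums of powers tend to zero
  have hr0 : ∀ i, Filter.Tendsto (fun t => ∑ j, (Atil ^ t) i j) Filter.atTop (nhds 0) := by
    intro i
    rw [Metric.tendsto_atTop]
    intro ε hε
    obtain ⟨k, hk⟩ := exists_pow_lt_of_lt_one hε hc1
    refine ⟨k * N, fun t ht => ?_⟩
    have h1 : ∑ j, (Atil ^ t) i j ≤ c ^ k := by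
      have hm := hmono (k * N) (t - k * N) i
      rw [Nat.add_sub_cancel' ht] at hm
      exact hm.trans (hck k i)
    have h2 : 0 ≤ ∑ j, (Atil ^ t) i j := Finset.sum_nonneg fun j _ => hpn t i j
    rw [Real.dist_eq, sub_zero, abs_of_nonneg h2]
    exact lt_of_le_of_lt h1 hk
  -- the deviations tend to zero
  set C : ℝ := ∑ j, |Z 0 j| with hC
  have hZbd : ∀ t i, |Z t i| ≤ (∑ j, (Atil ^ t) i j) * C := by
    intro t i
    rw [hZt t]
    have h1 : (Atil ^ t).mulVec (Z 0) i = ∑ j, (Atil ^ t) i j * Z 0 j := rfl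
    rw [h1]
    calc |∑ j, (Atil ^ t) i j * Z 0 j|
        ≤ ∑ j, |(Atil ^ t) i j * Z 0 j| := Finset.abs_sum_le_sum_abs _ _
      _ ≤ ∑ j, (Atil ^ t) i j * C := by
          refine Finset.sum_le_sum fun j _ => ?_
          rw [abs_mul, abs_of_nonneg (hpn t i j)]
          exact mul_le_mul_of_nonneg_left
            (Finset.single_le_sum (fun l _ => abs_nonneg (Z 0 l)) (Finset.mem_univ j))
            (hpn t i j)
      _ = _ := (Finset.sum_mul _ _ _).symm
  have hZ0lim : ∀ i, Filter.Tendsto (fun t => Z t i) Filter.atTop (nhds 0) := by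
    intro i
    have h := (hr0 i).mul_const C
    rw [zero_mul] at h
    exact squeeze_zero_norm (a := fun t => (∑ j, (Atil ^ t) i j) * C)
      (fun t => by rw [Real.norm_eq_abs]; exact hZbd t i) h
  rw [tendsto_pi_nhds]
  intro j
  refine Fin.cases ?_ ?_ j
  · exact Filter.Tendsto.congr (fun t => (hX0 t).symm) tendsto_const_nhds
  · intro i
    have h := (hZ0lim i).add_const σ
    rw [zero_add] at h
    exact h.congr fun t => by simp [hZdef]
end

section
/- Let A be an n×n row-stochastic real matrix whose first row is (1, 0, …, 0), with aᵢᵢ > 0 for all i, and let Ã denote the (n−1)×(n−1) lower-right submatrix. Assume Ã is substochastic and irreducible with at least one row of Ã summing to strictly less than 1. Let X_t = A X_{t−1} with X₁ ∈ ℝⁿ whose first coordinate equals σ̄. Then consensus to σ̄ is reached exponentially: for every r with ρ(Ã) < r < 1 there exists a constant C > 0 such that max_i |x_tⁱ − σ̄| ≤ C · r^{t−1} · ‖X₁ − σ̄ 𝟏ₙ‖_∞ for all t ≥ 1, where ρ(Ã) < 1 is the spectral radius of Ã. -/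
/-- The spectral radius of a real square matrix: the maximum of the absolute
values of its complex eigenvalues (as a real number). -/
noncomputable def matSpectralRadius {n : ℕ} (M : Matrix (Fin n) (Fin n) ℝ) : ℝ :=
  (spectralRadius ℂ (M.map (Complex.ofReal ·))).toReal

/-! The error `e t = X t - σ𝟏` vanishes at the leader, and since the rows of `A` sum to one its
follower block evolves by `ẽ (t + 1) = Ã ẽ t`; hence `|e t i| ≤ ‖Ã ^ t‖ ‖e 0‖` for the `ℓ∞`
operator norm. Irreducibility spreads the row-sum deficit of one row of `Ã` to all rows: some
power `Ã ^ T` has all row sums below one, so `‖Ã ^ T‖ < 1` and `ρ(Ã) < 1`. For `r > ρ(Ã)`,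
Gelfand's formula `‖Ã ^ t‖ ^ (1 / t) → ρ(Ã)` gives `‖Ã ^ t‖ ≤ C r ^ t`. -/

open Filter Asymptotics

namespace spectrum

section NormedField

variable {𝕜 A : Type*} [NormedField 𝕜] [NormedRing A] [NormedAlgebra 𝕜 A] [CompleteSpace A]

theorem spectralRadius_lt_top (a : A) : spectralRadius 𝕜 a < ⊤ :=
  (spectralRadius_le_pow_nnnorm_pow_one_div 𝕜 a 0).trans_lt <| by
    simpa using ENNReal.mul_lt_top ENNReal.coe_lt_top ENNReal.coe_lt_top

theorem spectralRadius_lt_one_of_nnnorm_pow_lt_one [NormOneClass A] {a : A} {T : ℕ}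
    (hT : T ≠ 0) (h : ‖a ^ T‖₊ < 1) : spectralRadius 𝕜 a < 1 :=
  (pow_lt_one_iff hT).mp <| (spectralRadius_pow_le a T hT).trans_lt <|
    (spectralRadius_le_nnnorm (a ^ T)).trans_lt (mod_cast h)

end NormedField

theorem exists_norm_pow_le_mul_pow_of_spectralRadius_lt {A : Type*} [NormedRing A]
    [NormedAlgebra ℂ A] [CompleteSpace A] (a : A) {r : ℝ}
    (hr : spectralRadius ℂ a < ENNReal.ofReal r) : ∃ C > 0, ∀ t : ℕ, ‖a ^ t‖ ≤ C * r ^ t := by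
  have hr₀ : 0 < r := ENNReal.ofReal_pos.mp (zero_le.trans_lt hr)
  have hev : ∀ᶠ t : ℕ in atTop, ‖a ^ t‖ ≤ ‖r ^ t‖ := by
    filter_upwards [(pow_norm_pow_one_div_tendsto_nhds_spectralRadius a).eventually_lt_const hr,
      eventually_ne_atTop 0] with t ht ht₀
    rw [ENNReal.ofReal_lt_ofReal_iff hr₀] at ht
    calc ‖a ^ t‖ = (‖a ^ t‖ ^ (1 / t : ℝ)) ^ t := by
          rw [one_div, Real.rpow_inv_natCast_pow (norm_nonneg _) ht₀]
      _ ≤ ‖r ^ t‖ := by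
          rw [Real.norm_of_nonneg (pow_nonneg hr₀.le t)]
          exact pow_le_pow_left₀ (by positivity) ht.le t
  obtain ⟨C, hC, hbound⟩ := bound_of_isBigO_nat_atTop (IsBigO.of_bound' hev)
  refine ⟨C, hC, fun t => ?_⟩
  simpa [Real.norm_of_nonneg (pow_nonneg hr₀.le t)] using hbound (pow_ne_zero t hr₀.ne')

end spectrum

theorem vecInfNorm_eq_norm {ι : Type*} [Fintype ι] (v : ι → ℝ) : vecInfNorm v = ‖v‖ :=
  le_antisymm (Real.iSup_le (fun i => norm_le_pi_norm v i) (norm_nonneg v))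
    ((pi_norm_le_iff_of_nonneg (Real.iSup_nonneg fun i => abs_nonneg (v i))).mpr
      fun i => le_ciSup (f := fun i => |v i|) (Set.finite_range _).bddAbove i)

namespace Matrix

theorem mulVec_one_apply {m ι α : Type*} [Fintype ι] [NonAssocSemiring α] (M : Matrix m ι α)
    (i : m) : (M *ᵥ 1) i = ∑ j, M i j := by
  simp [mulVec, dotProduct]

theorem mulVec_mono_of_nonneg {m ι α : Type*} [Fintype ι] [Semiring α] [PartialOrder α]
    [IsOrderedRing α] {M : Matrix m ι α} (hM : ∀ i j, 0 ≤ M i j) {v w : ι → α} (h : v ≤ w) :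
    M *ᵥ v ≤ M *ᵥ w :=
  fun i => dotProduct_le_dotProduct_of_nonneg_left h (hM i)

theorem mulVec_sub_const_of_rowSum_eq_one {m ι : Type*} [Fintype ι] {A : Matrix m ι ℝ}
    (hA : ∀ i, ∑ j, A i j = 1) (v : ι → ℝ) (σ : ℝ) :
    A *ᵥ (v - fun _ => σ) = A *ᵥ v - fun _ => σ := by
  ext i
  simp [mulVec, dotProduct, mul_sub, Finset.sum_sub_distrib, ← Finset.sum_mul, hA]

section Substochastic

variable {ι : Type*} [Fintype ι] [DecidableEq ι] {M : Matrix ι ι ℝ}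
variable (hM : ∀ i j, 0 ≤ M i j) (hrow : M *ᵥ 1 ≤ 1)
include hM hrow

theorem pow_mulVec_one_le_one (t : ℕ) : M ^ t *ᵥ 1 ≤ 1 := by
  induction t with
  | zero => simp
  | succ t ih =>
    rw [pow_succ', ← mulVec_mulVec]
    exact (mulVec_mono_of_nonneg hM ih).trans hrow

theorem antitone_pow_mulVec_one : Antitone fun t : ℕ => M ^ t *ᵥ 1 :=
  antitone_nat_of_succ_le fun t => by
    rw [pow_succ, ← mulVec_mulVec]
    exact mulVec_mono_of_nonneg (pow_apply_nonneg hM t) hrow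

theorem pow_succ_mulVec_one_lt_one {i k : ι} {m : ℕ} (hk : (M *ᵥ 1) k < 1)
    (hik : 0 < (M ^ m) i k) : (M ^ (m + 1) *ᵥ 1) i < 1 := by
  rw [pow_succ, ← mulVec_mulVec]
  calc (M ^ m *ᵥ (M *ᵥ 1)) i < (M ^ m *ᵥ 1) i := by
        refine Finset.sum_lt_sum (fun j _ => ?_) ⟨k, Finset.mem_univ k, ?_⟩
        · exact mul_le_mul_of_nonneg_left (hrow j) (pow_apply_nonneg hM m i j)
        · exact mul_lt_mul_of_pos_left hk hik
    _ ≤ 1 := pow_mulVec_one_le_one hM hrow m i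

theorem exists_pow_mulVec_one_lt_one
    (hreach : ∀ i, ∃ k m, (M *ᵥ 1) k < 1 ∧ 0 < (M ^ m) i k) :
    ∃ T ≠ 0, ∀ i, (M ^ T *ᵥ 1) i < 1 := by
  choose k m hk hm using hreach
  refine ⟨Finset.univ.sup m + 1, Nat.succ_ne_zero _, fun i => ?_⟩
  have hle : m i + 1 ≤ Finset.univ.sup m + 1 :=
    Nat.succ_le_succ (Finset.le_sup (Finset.mem_univ i))
  exact (antitone_pow_mulVec_one hM hrow hle i).trans_lt
    (pow_succ_mulVec_one_lt_one hM hrow (hk i) (hm i))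

end Substochastic

section Leader

variable {n : ℕ} {A : Matrix (Fin (n + 1)) (Fin (n + 1)) ℝ}

theorem mulVec_comp_succ_of_apply_zero_eq_zero {v : Fin (n + 1) → ℝ} (hv : v 0 = 0) :
    (A *ᵥ v) ∘ Fin.succ = A.submatrix Fin.succ Fin.succ *ᵥ (v ∘ Fin.succ) := by
  ext i
  simp [mulVec, dotProduct, Fin.sum_univ_succ, hv]

variable (hA₁ : A 0 0 = 1) (hA₂ : ∀ j, j ≠ 0 → A 0 j = 0)
include hA₁ hA₂

theorem mulVec_apply_zero_of_leader (v : Fin (n + 1) → ℝ) : (A *ᵥ v) 0 = v 0 := by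
  simp [mulVec, dotProduct, Fin.sum_univ_succ, hA₁, hA₂ _ (Fin.succ_ne_zero _)]

theorem pow_mulVec_apply_zero_of_leader (v : Fin (n + 1) → ℝ) (t : ℕ) :
    (A ^ t *ᵥ v) 0 = v 0 := by
  induction t with
  | zero => simp
  | succ t ih => rw [pow_succ', ← mulVec_mulVec, mulVec_apply_zero_of_leader hA₁ hA₂, ih]

theorem pow_mulVec_comp_succ_of_leader {v : Fin (n + 1) → ℝ} (hv : v 0 = 0) (t : ℕ) :
    (A ^ t *ᵥ v) ∘ Fin.succ = A.submatrix Fin.succ Fin.succ ^ t *ᵥ (v ∘ Fin.succ) := by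
  induction t with
  | zero => simp
  | succ t ih =>
    have h0 : (A ^ t *ᵥ v) 0 = 0 := (pow_mulVec_apply_zero_of_leader hA₁ hA₂ v t).trans hv
    rw [pow_succ', ← mulVec_mulVec, mulVec_comp_succ_of_apply_zero_eq_zero h0, ih, mulVec_mulVec,
      ← pow_succ']

end Leader

theorem map_ofReal_pow {ι : Type*} [Fintype ι] [DecidableEq ι] (M : Matrix ι ι ℝ) (t : ℕ) :
    (M ^ t).map ((↑) : ℝ → ℂ) = M.map (↑) ^ t :=
  M.map_pow Complex.ofRealHom t

end Matrix

section LinftyOpNorm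

-- Matrices carry the operator norm of `ℓ∞`, i.e. the largest absolute row sum.
attribute [local instance] Matrix.linftyOpNormedRing Matrix.linftyOpNormedAlgebra

namespace Matrix

variable {ι : Type*} [Fintype ι] [DecidableEq ι]

theorem linfty_opNNNorm_eq_nnnorm_mulVec_one {M : Matrix ι ι ℝ} (hM : ∀ i j, 0 ≤ M i j) :
    ‖M‖₊ = ‖M *ᵥ 1‖₊ := by
  rw [linfty_opNNNorm_def, Pi.nnnorm_def]
  congr 1 with i
  have hrow : 0 ≤ ∑ j, M i j := Finset.sum_nonneg fun j _ => hM i j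
  simp [mulVec, dotProduct, Real.norm_of_nonneg (hM i _), Real.norm_of_nonneg hrow]

theorem linfty_opNNNorm_map_ofReal (M : Matrix ι ι ℝ) : ‖M.map ((↑) : ℝ → ℂ)‖₊ = ‖M‖₊ := by
  simp [linfty_opNNNorm_def]

variable {n : ℕ} {A : Matrix (Fin (n + 1)) (Fin (n + 1)) ℝ}

theorem norm_pow_mulVec_le_of_leader (hA₁ : A 0 0 = 1) (hA₂ : ∀ j, j ≠ 0 → A 0 j = 0)
    {v : Fin (n + 1) → ℝ} (hv : v 0 = 0) (t : ℕ) :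
    ‖A ^ t *ᵥ v‖ ≤ ‖A.submatrix Fin.succ Fin.succ ^ t‖ * ‖v‖ := by
  refine (pi_norm_le_iff_of_nonneg (by positivity)).mpr fun i => ?_
  cases i using Fin.cases with
  | zero => rw [pow_mulVec_apply_zero_of_leader hA₁ hA₂, hv, norm_zero]; positivity
  | succ j =>
    have hv' : ‖v ∘ Fin.succ‖ ≤ ‖v‖ :=
      (pi_norm_le_iff_of_nonneg (norm_nonneg v)).mpr fun j => norm_le_pi_norm v j.succ
    rw [← Function.comp_apply (f := A ^ t *ᵥ v), pow_mulVec_comp_succ_of_leader hA₁ hA₂ hv]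
    calc _ ≤ ‖A.submatrix Fin.succ Fin.succ ^ t *ᵥ (v ∘ Fin.succ)‖ := norm_le_pi_norm _ j
      _ ≤ ‖A.submatrix Fin.succ Fin.succ ^ t‖ * ‖v ∘ Fin.succ‖ := linfty_opNorm_mulVec _ _
      _ ≤ _ := by gcongr

theorem abs_sub_le_of_leader (hA : ∀ i, ∑ j, A i j = 1) (hA₁ : A 0 0 = 1)
    (hA₂ : ∀ j, j ≠ 0 → A 0 j = 0) {σ : ℝ} {X : ℕ → Fin (n + 1) → ℝ}
    (hX : ∀ t, X (t + 1) = A *ᵥ X t) (hX₀ : X 0 0 = σ) (t : ℕ) (i : Fin (n + 1)) :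
    |X t i - σ| ≤ ‖A.submatrix Fin.succ Fin.succ ^ t‖ * vecInfNorm (X 0 - fun _ => σ) := by
  have herr : ∀ t, X t - (fun _ => σ) = A ^ t *ᵥ (X 0 - fun _ => σ) := by
    intro t
    induction t with
    | zero => simp
    | succ t ih => rw [hX, ← mulVec_sub_const_of_rowSum_eq_one hA, ih, mulVec_mulVec, ← pow_succ']
  rw [vecInfNorm_eq_norm]
  calc |X t i - σ| ≤ ‖X t - fun _ => σ‖ := norm_le_pi_norm (X t - fun _ => σ) i
    _ = ‖A ^ t *ᵥ (X 0 - fun _ => σ)‖ := by rw [herr]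
    _ ≤ _ := norm_pow_mulVec_le_of_leader hA₁ hA₂ (by simp [hX₀]) t

end Matrix

open Matrix

variable {n : ℕ}

theorem matSpectralRadius_lt_one_of_nnnorm_pow_lt_one {M : Matrix (Fin n) (Fin n) ℝ} {T : ℕ}
    (hT : T ≠ 0) (h : ‖M ^ T‖₊ < 1) : matSpectralRadius M < 1 := by
  rcases isEmpty_or_nonempty (Fin n) with hn | hn
  · simp [matSpectralRadius]
  · have hρ : spectralRadius ℂ (M.map ((↑) : ℝ → ℂ)) < 1 :=
      spectrum.spectralRadius_lt_one_of_nnnorm_pow_lt_one hT <| by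
        rwa [← map_ofReal_pow, linfty_opNNNorm_map_ofReal]
    exact ENNReal.toReal_lt_of_lt_ofReal (by simpa using hρ)

theorem matSpectralRadius_lt_one_of_substochastic {M : Matrix (Fin n) (Fin n) ℝ}
    (hM : ∀ i j, 0 ≤ M i j) (hrow : M *ᵥ 1 ≤ 1)
    (hreach : ∀ i, ∃ k m, (M *ᵥ 1) k < 1 ∧ 0 < (M ^ m) i k) : matSpectralRadius M < 1 := by
  obtain ⟨T, hT, hlt⟩ := exists_pow_mulVec_one_lt_one hM hrow hreach
  refine matSpectralRadius_lt_one_of_nnnorm_pow_lt_one hT ?_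
  rw [linfty_opNNNorm_eq_nnnorm_mulVec_one (pow_apply_nonneg hM T), ← NNReal.coe_lt_coe,
    coe_nnnorm, NNReal.coe_one, pi_norm_lt_iff one_pos]
  intro i
  have hnonneg : 0 ≤ (M ^ T *ᵥ 1) i :=
    dotProduct_nonneg_of_nonneg (pow_apply_nonneg hM T i) zero_le_one
  rw [Real.norm_of_nonneg hnonneg]
  exact hlt i

theorem exists_norm_pow_le_of_matSpectralRadius_lt (M : Matrix (Fin n) (Fin n) ℝ) {r : ℝ}
    (hr : matSpectralRadius M < r) : ∃ C > 0, ∀ t : ℕ, ‖M ^ t‖ ≤ C * r ^ t := by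
  obtain ⟨C, hC, hbound⟩ := spectrum.exists_norm_pow_le_mul_pow_of_spectralRadius_lt
    (M.map ((↑) : ℝ → ℂ))
    ((ENNReal.lt_ofReal_iff_toReal_lt (spectrum.spectralRadius_lt_top _).ne).mpr hr)
  refine ⟨C, hC, fun t => ?_⟩
  rw [← coe_nnnorm, ← linfty_opNNNorm_map_ofReal, map_ofReal_pow, coe_nnnorm]
  exact hbound t

end LinftyOpNorm

theorem exponential_consensus_with_leader_scalar_general
    {n : ℕ} (A : Matrix (Fin (n + 1)) (Fin (n + 1)) ℝ)
    (hA_row : ∀ i, ∑ j, A i j = 1)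
    (hA_leader₁ : A 0 0 = 1) (hA_leader₂ : ∀ j, j ≠ 0 → A 0 j = 0)
    (Atil : Matrix (Fin n) (Fin n) ℝ)
    (hAtil : ∀ i j, Atil i j = A i.succ j.succ)
    (hsub_nonneg : ∀ i j, 0 ≤ Atil i j)
    (hsub_row : ∀ i, ∑ j, Atil i j ≤ 1)
    (hsub_strict : ∃ i, ∑ j, Atil i j < 1)
    (hirr : ∀ i j, ∃ t : ℕ, 0 < t ∧ 0 < (Atil ^ t) i j)
    (σ : ℝ) (X : ℕ → Fin (n + 1) → ℝ)
    (hX : ∀ t, X (t + 1) = A.mulVec (X t))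
    (hX₀ : X 0 0 = σ) :
    matSpectralRadius Atil < 1 ∧
      ∀ r : ℝ, matSpectralRadius Atil < r → r < 1 →
        ∃ C : ℝ, 0 < C ∧
          ∀ t : ℕ, ∀ i, |X t i - σ| ≤
            C * r ^ t * vecInfNorm (X 0 - (fun _ => σ)) := by
  obtain rfl : Atil = A.submatrix Fin.succ Fin.succ := Matrix.ext hAtil
  obtain ⟨k, hk⟩ := hsub_strict
  have hρ : matSpectralRadius (A.submatrix Fin.succ Fin.succ) < 1 := by
    refine matSpectralRadius_lt_one_of_substochastic hsub_nonneg
      (fun i => (Matrix.mulVec_one_apply _ i).trans_le (hsub_row i)) fun i => ?_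
    obtain ⟨m, -, hm⟩ := hirr i k
    exact ⟨k, m, (Matrix.mulVec_one_apply _ k).trans_lt hk, hm⟩
  refine ⟨hρ, fun r hr _ => ?_⟩
  obtain ⟨C, hC, hpow⟩ := exists_norm_pow_le_of_matSpectralRadius_lt _ hr
  refine ⟨C, hC, fun t i =>
    (Matrix.abs_sub_le_of_leader hA_row hA_leader₁ hA_leader₂ hX hX₀ t i).trans ?_⟩
  exact mul_le_mul_of_nonneg_right (hpow t) (by rw [vecInfNorm_eq_norm]; positivity)

/-- **Corollary 2: exponential consensus with an unknown leader.**
Under the hypotheses of Theorem 2, `ρ(Ã) < 1` and for every rate `r` with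
`ρ(Ã) < r < 1` there is `C > 0` such that
`max_i |x_tⁱ − σ̄| ≤ C · r^{t−1} · ‖X₁ − σ̄𝟏ₙ‖_∞` (indices shifted so that the
initial condition is `X 0`). -/
theorem exponential_consensus_with_leader_scalar
    {n : ℕ} (A : Matrix (Fin (n + 1)) (Fin (n + 1)) ℝ)
    (hA_nonneg : ∀ i j, 0 ≤ A i j)
    (hA_row : ∀ i, ∑ j, A i j = 1)
    (hA_diag : ∀ i, 0 < A i i)
    (hA_leader₁ : A 0 0 = 1) (hA_leader₂ : ∀ j, j ≠ 0 → A 0 j = 0)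
    (Atil : Matrix (Fin n) (Fin n) ℝ)
    (hAtil : ∀ i j, Atil i j = A i.succ j.succ)
    (hsub_nonneg : ∀ i j, 0 ≤ Atil i j)
    (hsub_row : ∀ i, ∑ j, Atil i j ≤ 1)
    (hsub_strict : ∃ i, ∑ j, Atil i j < 1)
    (hirr : ∀ i j, ∃ t : ℕ, 0 < t ∧ 0 < (Atil ^ t) i j)
    (σ : ℝ) (X : ℕ → Fin (n + 1) → ℝ)
    (hX : ∀ t, X (t + 1) = A.mulVec (X t))
    (hX₀ : X 0 0 = σ) :
    matSpectralRadius Atil < 1 ∧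
      ∀ r : ℝ, matSpectralRadius Atil < r → r < 1 →
        ∃ C : ℝ, 0 < C ∧
          ∀ t : ℕ, ∀ i, |X t i - σ| ≤
            C * r ^ t * vecInfNorm (X 0 - (fun _ => σ)) :=
  exponential_consensus_with_leader_scalar_general A hA_row hA_leader₁ hA_leader₂ Atil hAtil
    hsub_nonneg hsub_row hsub_strict hirr σ X hX hX₀
end

section
/- Let A be an n×n row-stochastic real matrix with strictly positive diagonal entries, let ε₁,…,εₙ satisfy 0 < εᵢ < aᵢᵢ for every i with 𝓔 = diag(ε₁,…,εₙ), let k ≥ 1 and σ̄ ∈ ℝ^k, and let (X_t) in ℝ^{kn} satisfy X_{t+1} = (A ⊗ I_k) X_t + (𝓔 ⊗ I_k)(𝟏ₙ ⊗ σ̄ − X_t) from an arbitrary X₁. Then ‖(A − 𝓔) ⊗ I_k‖_∞ < 1 and for every t ≥ 1, ‖X_t − (𝟏ₙ ⊗ σ̄)‖_∞ ≤ ‖(A − 𝓔) ⊗ I_k‖_∞^{t−1} · ‖X₁ − (𝟏ₙ ⊗ σ̄)‖_∞; in particular consensus to 𝟏ₙ ⊗ σ̄ is reached exponentially fast. -/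
open Kronecker

/-!
Since `A` is row-stochastic, `𝟏ₙ ⊗ σ̄` is a fixed point of `A ⊗ I_k`, so the error
`e_t = X_t − 𝟏ₙ ⊗ σ̄` obeys the linear recursion `e_{t+1} = ((A − 𝓔) ⊗ I_k) e_t`, and the
operator-norm bound gives `‖e_t‖_∞ ≤ ‖(A − 𝓔) ⊗ I_k‖_∞^t ‖e_0‖_∞`. Because `0 < εᵢ < aᵢᵢ`, the
matrix `A − 𝓔` is still entrywise nonnegative, so its `i`-th absolute row sum is `1 − εᵢ < 1`;
tensoring with `I_k` does not change absolute row sums.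
-/

open Matrix

section InfNorm

variable {ι : Type*} [Fintype ι]

lemma vecInfNorm_nonneg (v : ι → ℝ) : 0 ≤ vecInfNorm v :=
  Real.iSup_nonneg fun _ => abs_nonneg _

lemma abs_le_vecInfNorm (v : ι → ℝ) (i : ι) : |v i| ≤ vecInfNorm v :=
  le_ciSup (f := fun j => |v j|) (Finite.bddAbove_range _) i

lemma vecInfNorm_le {v : ι → ℝ} {c : ℝ} (hc : 0 ≤ c) (h : ∀ i, |v i| ≤ c) :
    vecInfNorm v ≤ c :=
  Real.iSup_le h hc

lemma sum_abs_le_matInfNorm (M : Matrix ι ι ℝ) (i : ι) : ∑ j, |M i j| ≤ matInfNorm M :=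
  le_ciSup (f := fun r => ∑ j, |M r j|) (Finite.bddAbove_range _) i

lemma matInfNorm_nonneg (M : Matrix ι ι ℝ) : 0 ≤ matInfNorm M :=
  Real.iSup_nonneg fun _ => Finset.sum_nonneg fun _ _ => abs_nonneg _

lemma matInfNorm_le {M : Matrix ι ι ℝ} {c : ℝ} (hc : 0 ≤ c) (h : ∀ i, ∑ j, |M i j| ≤ c) :
    matInfNorm M ≤ c :=
  Real.iSup_le h hc

lemma matInfNorm_lt {M : Matrix ι ι ℝ} {c : ℝ} (hc : 0 < c) (h : ∀ i, ∑ j, |M i j| < c) :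
    matInfNorm M < c := by
  cases isEmpty_or_nonempty ι with
  | inl _ => rwa [matInfNorm, Real.iSup_of_isEmpty]
  | inr _ =>
    obtain ⟨i, hi⟩ := exists_eq_ciSup_of_finite (f := fun i => ∑ j, |M i j|)
    rw [matInfNorm, ← hi]
    exact h i

lemma vecInfNorm_mulVec_le (M : Matrix ι ι ℝ) (v : ι → ℝ) :
    vecInfNorm (M *ᵥ v) ≤ matInfNorm M * vecInfNorm v := by
  refine vecInfNorm_le (mul_nonneg (matInfNorm_nonneg M) (vecInfNorm_nonneg v)) fun i => ?_
  calc |(M *ᵥ v) i| ≤ ∑ j, |M i j| * |v j| := by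
        simpa only [mulVec, dotProduct, abs_mul] using Finset.abs_sum_le_sum_abs (fun j => M i j * v j) Finset.univ
    _ ≤ ∑ j, |M i j| * vecInfNorm v := by
        gcongr with j
        exact abs_le_vecInfNorm v j
    _ = (∑ j, |M i j|) * vecInfNorm v := (Finset.sum_mul _ _ _).symm
    _ ≤ matInfNorm M * vecInfNorm v := by
        gcongr
        exacts [vecInfNorm_nonneg v, sum_abs_le_matInfNorm M i]

lemma vecInfNorm_le_pow_mul_of_mulVec {M : Matrix ι ι ℝ} {e : ℕ → ι → ℝ}
    (he : ∀ t, e (t + 1) = M *ᵥ e t) (t : ℕ) :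
    vecInfNorm (e t) ≤ matInfNorm M ^ t * vecInfNorm (e 0) := by
  induction t with
  | zero => simp
  | succ t ih =>
    calc vecInfNorm (e (t + 1)) ≤ matInfNorm M * vecInfNorm (e t) :=
          he t ▸ vecInfNorm_mulVec_le M (e t)
      _ ≤ matInfNorm M * (matInfNorm M ^ t * vecInfNorm (e 0)) := by
          gcongr
          exact matInfNorm_nonneg M
      _ = matInfNorm M ^ (t + 1) * vecInfNorm (e 0) := by ring

end InfNorm

lemma matInfNorm_kronecker_le {ι κ : Type*} [Fintype ι] [Fintype κ]
    (B : Matrix ι ι ℝ) (C : Matrix κ κ ℝ) :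
    matInfNorm (B ⊗ₖ C) ≤ matInfNorm B * matInfNorm C := by
  refine matInfNorm_le (mul_nonneg (matInfNorm_nonneg B) (matInfNorm_nonneg C)) fun ⟨i, p⟩ => ?_
  calc ∑ jq : ι × κ, |(B ⊗ₖ C) (i, p) jq| = (∑ j, |B i j|) * ∑ q, |C p q| := by
        simp only [Fintype.sum_prod_type, kronecker_apply, abs_mul, Finset.sum_mul_sum]
    _ ≤ matInfNorm B * matInfNorm C :=
        mul_le_mul (sum_abs_le_matInfNorm B i) (sum_abs_le_matInfNorm C p)
          (Finset.sum_nonneg fun _ _ => abs_nonneg _) (matInfNorm_nonneg B)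

lemma matInfNorm_one_le {κ : Type*} [Fintype κ] [DecidableEq κ] :
    matInfNorm (1 : Matrix κ κ ℝ) ≤ 1 :=
  matInfNorm_le zero_le_one fun p => by
    simp [one_apply, apply_ite (abs : ℝ → ℝ)]

section Stochastic

variable {ι : Type*} [Fintype ι] {A : Matrix ι ι ℝ}

lemma sum_abs_sub_diagonal_apply [DecidableEq ι] (hA : ∀ i j, 0 ≤ A i j) {ε : ι → ℝ} {i : ι}
    (hε : ε i ≤ A i i) :
    ∑ j, |(A - diagonal ε) i j| = ∑ j, A i j - ε i := by
  have hnonneg : ∀ j, 0 ≤ (A - diagonal ε) i j := by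
    intro j
    rcases eq_or_ne i j with rfl | hij
    · simpa using hε
    · simpa [diagonal_apply_ne _ hij] using hA i j
  simp only [abs_of_nonneg (hnonneg _)]
  simp [Finset.sum_sub_distrib, diagonal_apply]

lemma matInfNorm_sub_diagonal_lt_one [DecidableEq ι] (hA : ∀ i j, 0 ≤ A i j)
    (hA_row : ∀ i, ∑ j, A i j = 1) {ε : ι → ℝ} (hε_pos : ∀ i, 0 < ε i) (hε_le : ∀ i, ε i ≤ A i i) :
    matInfNorm (A - diagonal ε) < 1 :=
  matInfNorm_lt one_pos fun i => by
    rw [sum_abs_sub_diagonal_apply hA (hε_le i), hA_row]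
    linarith [hε_pos i]

lemma kronecker_one_mulVec_of_sum_eq_one {κ : Type*} [Fintype κ] [DecidableEq κ]
    (hA_row : ∀ i, ∑ j, A i j = 1) (σ : κ → ℝ) :
    (A ⊗ₖ (1 : Matrix κ κ ℝ)) *ᵥ (fun p => σ p.2) = fun p => σ p.2 := by
  funext ⟨i, q⟩
  simp only [mulVec, dotProduct, Fintype.sum_prod_type, kronecker_apply, one_apply, mul_ite,
    mul_one, mul_zero, ite_mul, zero_mul, Finset.sum_ite_eq, Finset.mem_univ, if_true]
  rw [← Finset.sum_mul, hA_row, one_mul]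

end Stochastic

lemma Matrix.sub_kronecker {α l m n p : Type*} [NonUnitalNonAssocRing α]
    (A₁ A₂ : Matrix l m α) (B : Matrix n p α) :
    (A₁ - A₂) ⊗ₖ B = A₁ ⊗ₖ B - A₂ ⊗ₖ B := by
  ext ⟨i, i'⟩ ⟨j, j'⟩
  simp [sub_mul]

lemma mulVec_add_mulVec_sub_sub_eq {α ι : Type*} [NonUnitalNonAssocRing α] [Fintype ι]
    {P : Matrix ι ι α} (Q : Matrix ι ι α) {c : ι → α} (hc : P *ᵥ c = c) (x : ι → α) :
    P *ᵥ x + Q *ᵥ (c - x) - c = (P - Q) *ᵥ (x - c) := by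
  rw [sub_mulVec, mulVec_sub, mulVec_sub, mulVec_sub, hc]
  abel

/-- Indices are shifted so that the initial condition is `X 0`; the exponent `t − 1` of the
informal statement becomes `t`. -/
theorem exponential_consensus_with_feedback_vectored_general
    {n k : ℕ}
    (A : Matrix (Fin n) (Fin n) ℝ)
    (hA_nonneg : ∀ i j, 0 ≤ A i j)
    (hA_row : ∀ i, ∑ j, A i j = 1)
    (ε : Fin n → ℝ) (hε_pos : ∀ i, 0 < ε i) (hε_lt : ∀ i, ε i < A i i)
    (σ : Fin k → ℝ) (X : ℕ → Fin n × Fin k → ℝ)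
    (hX : ∀ t, X (t + 1) =
      (A ⊗ₖ (1 : Matrix (Fin k) (Fin k) ℝ)).mulVec (X t) +
        ((Matrix.diagonal ε) ⊗ₖ (1 : Matrix (Fin k) (Fin k) ℝ)).mulVec
          ((fun p => σ p.2) - X t)) :
    matInfNorm ((A - Matrix.diagonal ε) ⊗ₖ (1 : Matrix (Fin k) (Fin k) ℝ)) < 1 ∧
      ∀ t : ℕ, vecInfNorm (X t - (fun p => σ p.2)) ≤
        (matInfNorm ((A - Matrix.diagonal ε) ⊗ₖ (1 : Matrix (Fin k) (Fin k) ℝ))) ^ t *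
          vecInfNorm (X 0 - (fun p => σ p.2)) := by
  have hB : matInfNorm (A - diagonal ε) < 1 :=
    matInfNorm_sub_diagonal_lt_one hA_nonneg hA_row hε_pos fun i => (hε_lt i).le
  have hM : matInfNorm ((A - diagonal ε) ⊗ₖ (1 : Matrix (Fin k) (Fin k) ℝ)) < 1 :=
    calc _ ≤ matInfNorm (A - diagonal ε) * matInfNorm (1 : Matrix (Fin k) (Fin k) ℝ) :=
          matInfNorm_kronecker_le _ _
      _ ≤ matInfNorm (A - diagonal ε) :=
          mul_le_of_le_one_right (matInfNorm_nonneg _) matInfNorm_one_le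
      _ < 1 := hB
  refine ⟨hM, vecInfNorm_le_pow_mul_of_mulVec fun t => ?_⟩
  rw [hX t, sub_kronecker]
  exact mulVec_add_mulVec_sub_sub_eq _ (kronecker_one_mulVec_of_sum_eq_one hA_row σ) (X t)

/-- **Corollary 3: exponential consensus with feedback, vectored dynamics.**
Under the hypotheses of Theorem 3, `‖(A − 𝓔) ⊗ I_k‖_∞ < 1` and
`‖X_t − 𝟏ₙ ⊗ σ̄‖_∞ ≤ ‖(A − 𝓔) ⊗ I_k‖_∞^{t−1} · ‖X₁ − 𝟏ₙ ⊗ σ̄‖_∞`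
(indices shifted so that the initial condition is `X 0`). -/
theorem exponential_consensus_with_feedback_vectored
    {n k : ℕ} (hk : 1 ≤ k)
    (A : Matrix (Fin n) (Fin n) ℝ)
    (hA_nonneg : ∀ i j, 0 ≤ A i j)
    (hA_row : ∀ i, ∑ j, A i j = 1)
    (hA_diag : ∀ i, 0 < A i i)
    (ε : Fin n → ℝ) (hε_pos : ∀ i, 0 < ε i) (hε_lt : ∀ i, ε i < A i i)
    (σ : Fin k → ℝ) (X : ℕ → Fin n × Fin k → ℝ)
    (hX : ∀ t, X (t + 1) =
      (A ⊗ₖ (1 : Matrix (Fin k) (Fin k) ℝ)).mulVec (X t) +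
        ((Matrix.diagonal ε) ⊗ₖ (1 : Matrix (Fin k) (Fin k) ℝ)).mulVec
          ((fun p => σ p.2) - X t)) :
    matInfNorm ((A - Matrix.diagonal ε) ⊗ₖ (1 : Matrix (Fin k) (Fin k) ℝ)) < 1 ∧
      ∀ t : ℕ, vecInfNorm (X t - (fun p => σ p.2)) ≤
        (matInfNorm ((A - Matrix.diagonal ε) ⊗ₖ (1 : Matrix (Fin k) (Fin k) ℝ))) ^ t *
          vecInfNorm (X 0 - (fun p => σ p.2)) :=
  exponential_consensus_with_feedback_vectored_general A hA_nonneg hA_row ε hε_pos hε_lt σ X hX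
end

section
/- Let A be an n×n row-stochastic real matrix whose first row is (1, 0, …, 0), with aᵢᵢ > 0 for all i, and let Ã denote the (n−1)×(n−1) lower-right submatrix. Assume Ã is substochastic and irreducible with at least one row of Ã summing to strictly less than 1. Let k ≥ 1, let σ̄ ∈ ℝ^k, and let X_t = (A ⊗ I_k) X_{t−1} with initial condition X₁ ∈ ℝ^{kn} whose first k-dimensional block equals σ̄. Then X_t converges to 𝟏ₙ ⊗ σ̄ as t → ∞, i.e., all agents' volatility vectors converge to the leader's vector σ̄. -/
open Kronecker

/-- **Consensus with an unknown leader, vectored dynamics (Theorem 4).**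
Let `A` be row-stochastic with first row `(1,0,…,0)` and positive diagonal, `Ã`
its lower-right submatrix, assumed substochastic and irreducible with one row
summing to strictly less than `1`. If `X_t = (A ⊗ I_k) X_{t−1}` and the first
`k`-dimensional block of the initial condition equals `σ̄`, then
`X_t → 𝟏ₙ ⊗ σ̄`. -/
theorem consensus_with_leader_vectored
    {n k : ℕ} (hk : 1 ≤ k)
    (A : Matrix (Fin (n + 1)) (Fin (n + 1)) ℝ)
    (hA_nonneg : ∀ i j, 0 ≤ A i j)
    (hA_row : ∀ i, ∑ j, A i j = 1)
    (hA_diag : ∀ i, 0 < A i i)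
    (hA_leader₁ : A 0 0 = 1) (hA_leader₂ : ∀ j, j ≠ 0 → A 0 j = 0)
    (Atil : Matrix (Fin n) (Fin n) ℝ)
    (hAtil : ∀ i j, Atil i j = A i.succ j.succ)
    (hsub_nonneg : ∀ i j, 0 ≤ Atil i j)
    (hsub_row : ∀ i, ∑ j, Atil i j ≤ 1)
    (hsub_strict : ∃ i, ∑ j, Atil i j < 1)
    (hirr : ∀ i j, ∃ t : ℕ, 0 < t ∧ 0 < (Atil ^ t) i j)
    (σ : Fin k → ℝ) (X : ℕ → Fin (n + 1) × Fin k → ℝ)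
    (hX : ∀ t, X (t + 1) =
      (A ⊗ₖ (1 : Matrix (Fin k) (Fin k) ℝ)).mulVec (X t))
    (hX₀ : ∀ j, X 0 (0, j) = σ j) :
    Filter.Tendsto X Filter.atTop (nhds (fun p => σ p.2)) := by
  classical
  obtain ⟨i0, hi0⟩ := hsub_strict
  haveI : Nonempty (Fin n) := ⟨i0⟩
  haveI : Nonempty (Fin k) := ⟨⟨0, hk⟩⟩
  -- coordinate-wise recurrence
  have hrec : ∀ t (i : Fin (n+1)) (j : Fin k),
      X (t+1) (i, j) = ∑ p, A i p * X t (p, j) := by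
    intro t i j
    have h := congrFun (hX t) (i, j)
    rw [h]
    simp only [Matrix.mulVec, dotProduct, Fintype.sum_prod_type,
      Matrix.kroneckerMap_apply, Matrix.one_apply, mul_ite, mul_one, mul_zero,
      ite_mul, zero_mul, Finset.sum_ite_eq, Finset.mem_univ, if_true]
  -- leader is fixed
  have hlead : ∀ t j, X t (0, j) = σ j := by
    intro t
    induction t with
    | zero => exact hX₀
    | succ t ih =>
        intro j
        rw [hrec t 0 j, Finset.sum_eq_single (0 : Fin (n+1))]
        · rw [hA_leader₁, one_mul, ih j]
        · intro b _ hb; rw [hA_leader₂ b hb, zero_mul]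
        · intro h; exact absurd (Finset.mem_univ _) h
  -- error vector
  set y : ℕ → Fin n → Fin k → ℝ := fun t i j => X t (i.succ, j) - σ j with hy
  have hyrec : ∀ t i j, y (t+1) i j = ∑ p, Atil i p * y t p j := by
    intro t i j
    have hs : X (t+1) (i.succ, j)
        = A i.succ 0 * σ j + ∑ p : Fin n, Atil i p * X t (p.succ, j) := by
      rw [hrec t i.succ j, Fin.sum_univ_succ, hlead t j]
      congr 1
      exact Finset.sum_congr rfl fun p _ => by rw [hAtil]
    have hrow : A i.succ 0 + ∑ p : Fin n, Atil i p = 1 := by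
      have h := hA_row i.succ
      rw [Fin.sum_univ_succ] at h
      rw [show ∑ p : Fin n, Atil i p = ∑ p : Fin n, A i.succ p.succ from
        Finset.sum_congr rfl fun p _ => hAtil i p]
      exact h
    have expand : ∑ p, Atil i p * y t p j
        = ∑ p, Atil i p * X t (p.succ, j) - (∑ p, Atil i p) * σ j := by
      simp only [hy, mul_sub, Finset.sum_sub_distrib, Finset.sum_mul]
    rw [expand]
    simp only [hy]
    rw [hs]
    have ha : A i.succ 0 = 1 - ∑ p, Atil i p := by linarith
    rw [ha]; ring
  -- iterated recurrence
  have hpow : ∀ (s t : ℕ) (i : Fin n) (j : Fin k),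
      y (t + s) i j = ∑ p, (Atil ^ s) i p * y t p j := by
    intro s
    induction s with
    | zero => intro t i j; simp [Matrix.one_apply]
    | succ s ih =>
        intro t i j
        rw [show t + (s+1) = (t+s) + 1 from rfl, hyrec]
        have : ∀ p, y (t + s) p j = ∑ q, (Atil ^ s) p q * y t q j := fun p => ih t p j
        calc ∑ p, Atil i p * y (t + s) p j
            = ∑ p, ∑ q, Atil i p * ((Atil ^ s) p q * y t q j) := by
              refine Finset.sum_congr rfl fun p _ => ?_
              rw [this p, Finset.mul_sum]
          _ = ∑ q, (∑ p, Atil i p * (Atil ^ s) p q) * y t q j := by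
              rw [Finset.sum_comm]
              refine Finset.sum_congr rfl fun q _ => ?_
              rw [Finset.sum_mul]
              exact Finset.sum_congr rfl fun p _ => by ring
          _ = ∑ q, (Atil ^ (s+1)) i q * y t q j := by
              refine Finset.sum_congr rfl fun q _ => ?_
              rw [pow_succ', Matrix.mul_apply]
  -- nonnegativity of powers
  have hpow_nonneg : ∀ (s : ℕ) (i j : Fin n), 0 ≤ (Atil ^ s) i j := by
    intro s
    induction s with
    | zero => intro i j; simp [Matrix.one_apply]; positivity
    | succ s ih =>
        intro i j
        rw [pow_succ, Matrix.mul_apply]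
        exact Finset.sum_nonneg fun p _ => mul_nonneg (ih i p) (hsub_nonneg p j)
  -- row sums of powers ≤ 1
  have hrowsum : ∀ (s : ℕ) (i : Fin n), ∑ j, (Atil ^ s) i j ≤ 1 := by
    intro s
    induction s with
    | zero => intro i; simp [Matrix.one_apply]
    | succ s ih =>
        intro i
        have h1 : ∑ j, (Atil ^ (s+1)) i j
            = ∑ p, (Atil ^ s) i p * (∑ j, Atil p j) := by
          simp_rw [pow_succ, Matrix.mul_apply, Finset.mul_sum]
          rw [Finset.sum_comm]
        rw [h1]
        calc ∑ p, (Atil ^ s) i p * (∑ j, Atil p j)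
            ≤ ∑ p, (Atil ^ s) i p * 1 :=
              Finset.sum_le_sum fun p _ =>
                mul_le_mul_of_nonneg_left (hsub_row p) (hpow_nonneg s i p)
          _ = ∑ p, (Atil ^ s) i p := by simp
          _ ≤ 1 := ih i
  -- positive diagonal of Atil
  have hdiag : ∀ i : Fin n, 0 < Atil i i := fun i => by
    rw [hAtil]; exact hA_diag i.succ
  -- positivity propagates to higher powers
  have hmono : ∀ (t : ℕ) (i j : Fin n), 0 < (Atil ^ t) i j → 0 < (Atil ^ (t+1)) i j := by
    intro t i j h
    rw [pow_succ, Matrix.mul_apply]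
    have hle : (Atil ^ t) i j * Atil j j ≤ ∑ p, (Atil ^ t) i p * Atil p j :=
      Finset.single_le_sum
        (fun p _ => mul_nonneg (hpow_nonneg t i p) (hsub_nonneg p j))
        (Finset.mem_univ j)
    exact lt_of_lt_of_le (mul_pos h (hdiag j)) hle
  have hmono' : ∀ (t t' : ℕ), t ≤ t' → ∀ i j, 0 < (Atil ^ t) i j → 0 < (Atil ^ t') i j := by
    intro t t' htt'
    induction t' , htt' using Nat.le_induction with
    | base => exact fun i j h => h
    | succ t' htt' ih => exact fun i j h => hmono t' i j (ih i j h)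
  -- uniform positive power T
  set T : ℕ := Finset.univ.sup (fun p : Fin n × Fin n => (hirr p.1 p.2).choose) with hT
  have hTpos : ∀ i j, 0 < (Atil ^ T) i j := by
    intro i j
    have hc := (hirr i j).choose_spec
    exact hmono' _ _ (Finset.le_sup (f := fun p : Fin n × Fin n => (hirr p.1 p.2).choose)
      (Finset.mem_univ (i, j))) i j hc.2
  set M : ℕ := T + 1 with hM
  have hMpos : 0 < M := Nat.succ_pos T
  -- all row sums of Atil^M strictly below 1
  have hMrow : ∀ i, ∑ j, (Atil ^ M) i j < 1 := by
    intro i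
    have h1 : ∑ j, (Atil ^ M) i j
        = ∑ p, (Atil ^ T) i p * (∑ j, Atil p j) := by
      simp_rw [hM, pow_succ, Matrix.mul_apply, Finset.mul_sum]
      rw [Finset.sum_comm]
    rw [h1]
    have h2 : ∑ p, (Atil ^ T) i p * (∑ j, Atil p j)
        < ∑ p, (Atil ^ T) i p * 1 := by
      refine Finset.sum_lt_sum (fun p _ =>
        mul_le_mul_of_nonneg_left (hsub_row p) (hpow_nonneg T i p)) ⟨i0, Finset.mem_univ i0, ?_⟩
      exact mul_lt_mul_of_pos_left hi0 (hTpos i i0)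
    calc ∑ p, (Atil ^ T) i p * (∑ j, Atil p j)
        < ∑ p, (Atil ^ T) i p * 1 := h2
      _ = ∑ p, (Atil ^ T) i p := by simp
      _ ≤ 1 := hrowsum T i
  -- contraction constant
  set c : ℝ := Finset.univ.sup' Finset.univ_nonempty
      (fun i : Fin n => ∑ j, (Atil ^ M) i j) with hc
  have hc1 : c < 1 := (Finset.sup'_lt_iff _).2 fun i _ => hMrow i
  have hcM : ∀ i, ∑ j, (Atil ^ M) i j ≤ c :=
    fun i => Finset.le_sup' (f := fun i : Fin n => ∑ j, (Atil ^ M) i j)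
      (Finset.mem_univ i)
  have hc0 : 0 ≤ c :=
    le_trans (Finset.sum_nonneg fun j _ => hpow_nonneg M i0 j) (hcM i0)
  -- generic bound lemma
  have hbound : ∀ (s : ℕ) (r : ℝ), (∀ i, ∑ j, (Atil ^ s) i j ≤ r) →
      ∀ (D : ℝ) (v : Fin n → ℝ), 0 ≤ D → (∀ p, |v p| ≤ D) →
      ∀ i, |∑ p, (Atil ^ s) i p * v p| ≤ r * D := by
    intro s r hr D v hD hv i
    calc |∑ p, (Atil ^ s) i p * v p|
        ≤ ∑ p, |(Atil ^ s) i p * v p| := Finset.abs_sum_le_sum_abs _ _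
      _ = ∑ p, (Atil ^ s) i p * |v p| := by
          refine Finset.sum_congr rfl fun p _ => ?_
          rw [abs_mul, abs_of_nonneg (hpow_nonneg s i p)]
      _ ≤ ∑ p, (Atil ^ s) i p * D :=
          Finset.sum_le_sum fun p _ =>
            mul_le_mul_of_nonneg_left (hv p) (hpow_nonneg s i p)
      _ = (∑ p, (Atil ^ s) i p) * D := (Finset.sum_mul _ _ _).symm
      _ ≤ r * D := mul_le_mul_of_nonneg_right (hr i) hD
  -- initial bound
  set B : ℝ := Finset.univ.sup' Finset.univ_nonempty
      (fun p : Fin n × Fin k => |y 0 p.1 p.2|) with hBdef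
  have hBy : ∀ i j, |y 0 i j| ≤ B :=
    fun i j => Finset.le_sup' (f := fun p : Fin n × Fin k => |y 0 p.1 p.2|)
      (Finset.mem_univ (i, j))
  have hB0 : 0 ≤ B := le_trans (abs_nonneg _) (hBy i0 ⟨0, hk⟩)
  -- uniform bound at all times
  have hle : ∀ t i j, |y t i j| ≤ B := by
    intro t
    induction t with
    | zero => exact hBy
    | succ t ih =>
        intro i j
        have h1 : y (t + 1) i j = ∑ p, (Atil ^ 1) i p * y t p j := hpow 1 t i j
        rw [h1]
        have := hbound 1 1 (fun i => by rw [pow_one]; exact hsub_row i) B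
          (fun p => y t p j) hB0 (fun p => ih p j) i
        simpa using this
  -- geometric decay
  have hmain : ∀ t i j, |y t i j| ≤ c ^ (t / M) * B := by
    intro t
    induction t using Nat.strong_induction_on with
    | _ t ih =>
      by_cases h : t < M
      · intro i j
        rw [Nat.div_eq_of_lt h, pow_zero, one_mul]
        exact hle t i j
      · push_neg at h
        intro i j
        have hsub : t - M + M = t := Nat.sub_add_cancel h
        have hlt : t - M < t := by omega
        have h1 : y t i j = ∑ p, (Atil ^ M) i p * y (t - M) p j := by
          conv_lhs => rw [← hsub]
          exact hpow M (t - M) i j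
        rw [h1]
        have h2 := hbound M c hcM (c ^ ((t - M) / M) * B)
          (fun p => y (t - M) p j)
          (mul_nonneg (pow_nonneg hc0 _) hB0)
          (fun p => ih (t - M) hlt p j) i
        have h3 : (t - M) / M + 1 = t / M := by
          have := Nat.add_div_right (t - M) hMpos
          rw [hsub] at this
          omega
        calc |∑ p, (Atil ^ M) i p * y (t - M) p j|
            ≤ c * (c ^ ((t - M) / M) * B) := h2
          _ = c ^ ((t - M) / M + 1) * B := by rw [pow_succ]; ring
          _ = c ^ (t / M) * B := by rw [h3]
  -- the bound tends to zero
  have hdiv : Filter.Tendsto (fun t : ℕ => t / M) Filter.atTop Filter.atTop :=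
    Filter.tendsto_atTop_atTop.2 fun b =>
      ⟨b * M, fun t ht => (Nat.le_div_iff_mul_le hMpos).2 ht⟩
  have htend0 : Filter.Tendsto (fun t : ℕ => c ^ (t / M) * B) Filter.atTop (nhds 0) := by
    have h := ((tendsto_pow_atTop_nhds_zero_of_lt_one hc0 hc1).comp hdiv).mul_const B
    simpa using h
  -- conclude
  rw [tendsto_pi_nhds]
  rintro ⟨i, j⟩
  refine Fin.cases ?_ ?_ i
  · have heq : (fun t => X t ((0 : Fin (n+1)), j)) = fun _ => σ j :=
      funext fun t => hlead t j
    simpa [heq] using tendsto_const_nhds (α := ℝ) (f := Filter.atTop (α := ℕ))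
  · intro i'
    have hy0 : Filter.Tendsto (fun t => y t i' j) Filter.atTop (nhds 0) := by
      refine squeeze_zero_norm (fun t => ?_) htend0
      simpa [Real.norm_eq_abs] using hmain t i' j
    have heq : (fun t => X t (i'.succ, j)) = fun t => y t i' j + σ j := by
      funext t; simp [hy]
    rw [heq]
    simpa using hy0.add_const (σ j)
end

section
/- Let A be an n×n row-stochastic real matrix that is primitive, i.e., there exists a positive integer m such that every entry of A^m is strictly positive (equivalently, A is irreducible and aperiodic). Then for every initial condition X₁ ∈ ℝⁿ there exists a constant c ∈ ℝ (depending on A and X₁) such that A^{t} X₁ converges to c 𝟏ₙ as t → ∞; that is, the naive opinion dynamics X_t = A X_{t−1} reaches consensus to a point. -/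
open Finset Filter

private lemma rowsum_pow {n : ℕ} (A : Matrix (Fin n) (Fin n) ℝ)
    (hA_row : ∀ i, ∑ j, A i j = 1) (k : ℕ) (i : Fin n) :
    ∑ j, (A ^ k) i j = 1 := by
  induction k with
  | zero => simp [Matrix.one_apply]
  | succ k ih =>
    rw [pow_succ]
    simp only [Matrix.mul_apply]
    rw [Finset.sum_comm]
    calc ∑ l, ∑ j, (A ^ k) i l * A l j
        = ∑ l, (A ^ k) i l * ∑ j, A l j := by simp [Finset.mul_sum]
      _ = 1 := by simp [hA_row, ih]

private lemma mulVec_le_sup' {n : ℕ} (hne : (Finset.univ : Finset (Fin n)).Nonempty)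
    (C : Matrix (Fin n) (Fin n) ℝ) (hC : ∀ i j, 0 ≤ C i j)
    (hrow : ∀ i, ∑ j, C i j = 1) (x : Fin n → ℝ) (i : Fin n) :
    C.mulVec x i ≤ univ.sup' hne x := by
  have : C.mulVec x i = ∑ j, C i j * x j := rfl
  rw [this]
  calc ∑ j, C i j * x j ≤ ∑ j, C i j * univ.sup' hne x :=
        Finset.sum_le_sum fun j _ =>
          mul_le_mul_of_nonneg_left (Finset.le_sup' x (mem_univ j)) (hC i j)
    _ = univ.sup' hne x := by rw [← Finset.sum_mul, hrow, one_mul]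

private lemma inf'_le_mulVec {n : ℕ} (hne : (Finset.univ : Finset (Fin n)).Nonempty)
    (C : Matrix (Fin n) (Fin n) ℝ) (hC : ∀ i j, 0 ≤ C i j)
    (hrow : ∀ i, ∑ j, C i j = 1) (x : Fin n → ℝ) (i : Fin n) :
    univ.inf' hne x ≤ C.mulVec x i := by
  have : C.mulVec x i = ∑ j, C i j * x j := rfl
  rw [this]
  calc univ.inf' hne x = ∑ j, C i j * univ.inf' hne x := by
        rw [← Finset.sum_mul, hrow, one_mul]
    _ ≤ ∑ j, C i j * x j :=
        Finset.sum_le_sum fun j _ =>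
          mul_le_mul_of_nonneg_left (Finset.inf'_le x (mem_univ j)) (hC i j)

/-- key contraction estimate: one application of a matrix with all entries ≥ δ -/
private lemma contraction {n : ℕ} (hne : (Finset.univ : Finset (Fin n)).Nonempty)
    (B : Matrix (Fin n) (Fin n) ℝ) {δ : ℝ} (hδ : ∀ i j, δ ≤ B i j)
    (hB : ∀ i j, 0 ≤ B i j) (hrow : ∀ i, ∑ j, B i j = 1) (x : Fin n → ℝ) :
    univ.sup' hne (B.mulVec x) - univ.inf' hne (B.mulVec x)
      ≤ (1 - 2 * δ) * (univ.sup' hne x - univ.inf' hne x) := by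
  set Mx := univ.sup' hne x with hMx
  set mx := univ.inf' hne x with hmx
  have hosc : 0 ≤ Mx - mx := by
    obtain ⟨i0, -⟩ := hne
    have := (Finset.inf'_le x (mem_univ i0)).trans (Finset.le_sup' x (mem_univ i0))
    linarith
  obtain ⟨k0, -, hk0⟩ := Finset.exists_mem_eq_inf' hne x
  obtain ⟨k1, -, hk1⟩ := Finset.exists_mem_eq_sup' hne x
  -- upper bound for each coordinate
  have hup : ∀ i, B.mulVec x i ≤ Mx - δ * (Mx - mx) := by
    intro i
    have hsplit : B.mulVec x i = B i k0 * x k0 + ∑ k ∈ univ.erase k0, B i k * x k := by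
      have : B.mulVec x i = ∑ k, B i k * x k := rfl
      rw [this, ← Finset.add_sum_erase _ _ (mem_univ k0)]
    have hrest : ∑ k ∈ univ.erase k0, B i k * x k ≤ (1 - B i k0) * Mx := by
      have h1 : ∑ k ∈ univ.erase k0, B i k * x k ≤ ∑ k ∈ univ.erase k0, B i k * Mx :=
        Finset.sum_le_sum fun k _ =>
          mul_le_mul_of_nonneg_left (Finset.le_sup' x (mem_univ k)) (hB i k)
      have h2 : ∑ k ∈ univ.erase k0, B i k = 1 - B i k0 := by
        have := Finset.add_sum_erase univ (fun k => B i k) (mem_univ k0)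
        rw [hrow i] at this; linarith
      calc ∑ k ∈ univ.erase k0, B i k * x k ≤ ∑ k ∈ univ.erase k0, B i k * Mx := h1
        _ = (1 - B i k0) * Mx := by rw [← Finset.sum_mul, h2]
    have hx0 : x k0 = mx := hk0.symm
    have hBk : δ ≤ B i k0 := hδ i k0
    have key : δ * (Mx - mx) ≤ B i k0 * (Mx - mx) := mul_le_mul_of_nonneg_right hBk hosc
    rw [hsplit, hx0]
    calc B i k0 * mx + ∑ k ∈ univ.erase k0, B i k * x k
        ≤ B i k0 * mx + (1 - B i k0) * Mx := by linarith
      _ = Mx - B i k0 * (Mx - mx) := by ring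
      _ ≤ Mx - δ * (Mx - mx) := by linarith
  have hdown : ∀ i, mx + δ * (Mx - mx) ≤ B.mulVec x i := by
    intro i
    have hsplit : B.mulVec x i = B i k1 * x k1 + ∑ k ∈ univ.erase k1, B i k * x k := by
      have : B.mulVec x i = ∑ k, B i k * x k := rfl
      rw [this, ← Finset.add_sum_erase _ _ (mem_univ k1)]
    have hrest : (1 - B i k1) * mx ≤ ∑ k ∈ univ.erase k1, B i k * x k := by
      have h1 : ∑ k ∈ univ.erase k1, B i k * mx ≤ ∑ k ∈ univ.erase k1, B i k * x k :=
        Finset.sum_le_sum fun k _ =>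
          mul_le_mul_of_nonneg_left (Finset.inf'_le x (mem_univ k)) (hB i k)
      have h2 : ∑ k ∈ univ.erase k1, B i k = 1 - B i k1 := by
        have := Finset.add_sum_erase univ (fun k => B i k) (mem_univ k1)
        rw [hrow i] at this; linarith
      calc (1 - B i k1) * mx = ∑ k ∈ univ.erase k1, B i k * mx := by rw [← Finset.sum_mul, h2]
        _ ≤ ∑ k ∈ univ.erase k1, B i k * x k := h1
    have hx1 : x k1 = Mx := hk1.symm
    have hBk : δ ≤ B i k1 := hδ i k1
    have key : δ * (Mx - mx) ≤ B i k1 * (Mx - mx) := mul_le_mul_of_nonneg_right hBk hosc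
    rw [hsplit, hx1]
    calc mx + δ * (Mx - mx) ≤ mx + B i k1 * (Mx - mx) := by linarith
      _ = B i k1 * Mx + (1 - B i k1) * mx := by ring
      _ ≤ B i k1 * Mx + ∑ k ∈ univ.erase k1, B i k * x k := by linarith
  have hs : univ.sup' hne (B.mulVec x) ≤ Mx - δ * (Mx - mx) :=
    Finset.sup'_le hne _ fun i _ => hup i
  have hi : mx + δ * (Mx - mx) ≤ univ.inf' hne (B.mulVec x) :=
    Finset.le_inf' hne _ fun i _ => hdown i
  linarith

/-- **DeGroot consensus (Proposition 1).**
If `A` is a row-stochastic primitive matrix (some power of `A` has all entries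
strictly positive, equivalently `A` is irreducible and aperiodic), then for every
initial condition `X₁` the naive opinion dynamics `X_t = A X_{t−1}` reaches
consensus to a point: `A^t X₁ → c 𝟏ₙ` for some constant `c` depending on `A`
and `X₁`. -/
theorem degroot_consensus_to_a_point
    {n : ℕ} (A : Matrix (Fin n) (Fin n) ℝ)
    (hA_nonneg : ∀ i j, 0 ≤ A i j)
    (hA_row : ∀ i, ∑ j, A i j = 1)
    (hprim : ∃ m : ℕ, 0 < m ∧ ∀ i j, 0 < (A ^ m) i j)
    (X₁ : Fin n → ℝ) :
    ∃ c : ℝ, Filter.Tendsto (fun t : ℕ => (A ^ t).mulVec X₁)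
      Filter.atTop (nhds (fun _ => c)) := by
  rcases Nat.eq_zero_or_pos n with hn | hn
  · subst hn
    refine ⟨0, ?_⟩
    have : ∀ t : ℕ, (A ^ t).mulVec X₁ = fun _ => (0 : ℝ) := fun t => Subsingleton.elim _ _
    simp only [this]
    exact tendsto_const_nhds
  obtain ⟨p, hp, hpos⟩ := hprim
  have hne : (Finset.univ : Finset (Fin n)).Nonempty :=
    univ_nonempty_iff.mpr (Fin.pos_iff_nonempty.mp hn)
  set f : ℕ → Fin n → ℝ := fun t => (A ^ t).mulVec X₁ with hf
  set M : ℕ → ℝ := fun t => univ.sup' hne (f t) with hM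
  set μ : ℕ → ℝ := fun t => univ.inf' hne (f t) with hμ
  have hstep : ∀ t, f (t + 1) = A.mulVec (f t) := by
    intro t
    simp only [hf, pow_succ']
    rw [← Matrix.mulVec_mulVec]
  have hM_anti : Antitone M := by
    refine antitone_nat_of_succ_le fun t => ?_
    refine Finset.sup'_le hne _ fun i _ => ?_
    rw [hstep t]
    exact mulVec_le_sup' hne A hA_nonneg hA_row (f t) i
  have hμ_mono : Monotone μ := by
    refine monotone_nat_of_le_succ fun t => ?_
    refine Finset.le_inf' hne _ fun i _ => ?_
    rw [hstep t]
    exact inf'_le_mulVec hne A hA_nonneg hA_row (f t) i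
  have hμ_le_M : ∀ t, μ t ≤ M t := by
    intro t
    obtain ⟨i0, -⟩ := hne
    exact (Finset.inf'_le (f t) (mem_univ i0)).trans (Finset.le_sup' (f t) (mem_univ i0))
  -- oscillation
  set osc : ℕ → ℝ := fun t => M t - μ t with hosc
  have hosc_nonneg : ∀ t, 0 ≤ osc t := fun t => sub_nonneg.mpr (hμ_le_M t)
  have hosc_anti : Antitone osc := fun s t hst =>
    sub_le_sub (hM_anti hst) (hμ_mono hst)
  -- the matrix B = A^p
  set B : Matrix (Fin n) (Fin n) ℝ := A ^ p with hB
  set δ : ℝ := univ.inf' hne fun i => univ.inf' hne fun j => B i j with hδ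
  have hδpos : 0 < δ := by
    rw [hδ]
    rw [Finset.lt_inf'_iff]
    intro i _
    rw [Finset.lt_inf'_iff]
    intro j _
    exact hpos i j
  have hδle : ∀ i j, δ ≤ B i j := by
    intro i j
    calc δ ≤ univ.inf' hne fun j => B i j := Finset.inf'_le _ (mem_univ i)
      _ ≤ B i j := Finset.inf'_le _ (mem_univ j)
  have hBnn : ∀ i j, 0 ≤ B i j := fun i j => (hpos i j).le
  have hBrow : ∀ i, ∑ j, B i j = 1 := rowsum_pow A hA_row p
  set r : ℝ := max (1 - 2 * δ) 0 with hr
  have hr0 : 0 ≤ r := le_max_right _ _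
  have hr1 : r < 1 := by
    rw [hr, max_lt_iff]
    constructor <;> [linarith; norm_num]
  -- contraction along the subsequence p * k
  have hfpk : ∀ k, f (p * (k + 1)) = B.mulVec (f (p * k)) := by
    intro k
    have : p * (k + 1) = p + p * k := by ring
    simp only [hf, this, pow_add, hB]
    rw [← Matrix.mulVec_mulVec]
  have hcontr : ∀ k, osc (p * k) ≤ r ^ k * osc 0 := by
    intro k
    induction k with
    | zero => simp [hosc_nonneg 0]
    | succ k ih =>
      have h1 : osc (p * (k + 1)) ≤ (1 - 2 * δ) * osc (p * k) := by
        have := contraction hne B hδle hBnn hBrow (f (p * k))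
        rw [← hfpk k] at this
        exact this
      have h2 : (1 - 2 * δ) * osc (p * k) ≤ r * osc (p * k) :=
        mul_le_mul_of_nonneg_right (le_max_left _ _) (hosc_nonneg _)
      have h3 : r * osc (p * k) ≤ r * (r ^ k * osc 0) :=
        mul_le_mul_of_nonneg_left ih hr0
      calc osc (p * (k + 1)) ≤ r * (r ^ k * osc 0) := by linarith
        _ = r ^ (k + 1) * osc 0 := by ring
  -- osc tends to 0
  have hosc_bound : ∀ t, osc t ≤ r ^ (t / p) * osc 0 := by
    intro t
    calc osc t ≤ osc (p * (t / p)) := hosc_anti (Nat.mul_div_le t p)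
      _ ≤ r ^ (t / p) * osc 0 := hcontr _
  have hdiv : Tendsto (fun t : ℕ => t / p) atTop atTop :=
    le_of_eq (Filter.map_div_atTop_eq_nat p hp)
  have hbound0 : Tendsto (fun t : ℕ => r ^ (t / p) * osc 0) atTop (nhds 0) := by
    have := ((tendsto_pow_atTop_nhds_zero_of_lt_one hr0 hr1).comp hdiv).mul_const (osc 0)
    simpa using this
  have hosc_to0 : Tendsto osc atTop (nhds 0) :=
    squeeze_zero hosc_nonneg hosc_bound hbound0
  -- μ converges
  have hbdd : BddAbove (Set.range μ) := by
    refine ⟨M 0, ?_⟩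
    rintro x ⟨t, rfl⟩
    exact (hμ_le_M t).trans (hM_anti (Nat.zero_le t))
  set c : ℝ := ⨆ t, μ t with hc
  have hμ_to : Tendsto μ atTop (nhds c) := tendsto_atTop_ciSup hμ_mono hbdd
  have hM_to : Tendsto M atTop (nhds c) := by
    have h := hμ_to.add hosc_to0
    rw [add_zero] at h
    have hMe : M = fun t => μ t + osc t := by
      funext t; simp [hosc]
    rw [hMe]
    exact h
  refine ⟨c, ?_⟩
  rw [tendsto_pi_nhds]
  intro i
  refine tendsto_of_tendsto_of_tendsto_of_le_of_le hμ_to hM_to ?_ ?_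
  · intro t
    exact Finset.inf'_le _ (mem_univ i)
  · intro t
    exact Finset.le_sup' _ (mem_univ i)
end
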